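/- For all constants C > c > 0 there is a constant K such that the following holds: for every positive integer t and every real ρ with ρ ≥ 2 and c < t − ρ < C, |y_t(ρ) − log(t·2^t)| ≤ K. -/

import Mathlib

open Filter Real

/-- `d_i = 2^C(i,2) i!`. -/
noncomputable def dI (i : ℕ) : ℝ := 2 ^ i.choose 2 * (i.factorial : ℝ)

/-- `P̃_{ρ,t}`: the set of `(p_1,…,p_t) ∈ [0,1]^t` with `Σ p_i = 1` and `Σ i p_i = ρ`
(index `i : Fin t` denotes size `i+1`). -/
def Ptilde (ρ : ℝ) (t : ℕ) : Set (Fin t → ℝ) :=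
  {q | (∀ i, q i ∈ Set.Icc (0 : ℝ) 1) ∧ (∑ i, q i) = 1 ∧
    (∑ i, ((i.1 + 1 : ℕ) : ℝ) * q i) = ρ}

/-- `L̃(ρ,k,p) = ρ log(ρk) − log k − ρ + 1 − Σ p_i log(p_i d_i)`. -/
noncomputable def Ltilde (ρ k : ℝ) {t : ℕ} (q : Fin t → ℝ) : ℝ :=
  ρ * Real.log (ρ * k) - Real.log k - ρ + 1 -
    ∑ i, q i * Real.log (q i * dI (i.1 + 1))

/-- `L̃₀(ρ,k,t) = sup {L̃(ρ,k,p) : p ∈ P̃_{ρ,t}}`. -/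
noncomputable def Ltilde0 (ρ k : ℝ) (t : ℕ) : ℝ :=
  sSup {L : ℝ | ∃ q ∈ Ptilde ρ t, L = Ltilde ρ k q}

/-- `L̂₀(n,k,t) = L̃₀(n/k, k, t)`. -/
noncomputable def Lhat0 (n k : ℝ) (t : ℕ) : ℝ := Ltilde0 (n / k) k t

open Finset

lemma dI_pos (i : ℕ) : 0 < dI i := by
  unfold dI
  positivity

lemma choose_succ_two (j : ℕ) : (j+1).choose 2 = j.choose 2 + j := by
  rw [Nat.choose_two_right, Nat.choose_two_right, Nat.add_sub_cancel]; exact Nat.triangle_succ j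

lemma dI_succ (i : ℕ) : dI (i+1) = dI i * (2^i * ((i:ℝ)+1)) := by
  unfold dI
  rw [choose_succ_two, Nat.factorial_succ, pow_add]
  push_cast
  ring

lemma nat_j_two_pow : ∀ j : ℕ, j * 2^j ≤ 2^(j.choose 2) * 4 := by
  intro j
  match j with
  | 0 => simp
  | 1 => simp
  | (n+2) =>
    induction n with
    | zero => decide
    | succ m ih =>
      calc (m+3) * 2^(m+3) = ((m+3) * 2) * 2^(m+2) := by ring
        _ ≤ (2*(m+2) * 2) * 2^(m+2) := by apply Nat.mul_le_mul_right; omega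
        _ = 4 * ((m+2) * 2^(m+2)) := by ring
        _ ≤ 4 * (2^((m+2).choose 2) * 4) := by exact Nat.mul_le_mul_left _ ih
        _ = 2^((m+2).choose 2) * 16 := by ring
        _ ≤ 2^((m+2).choose 2) * (2^(m+2) * 4) := by
            apply Nat.mul_le_mul_left
            have : 4 ≤ 2^(m+2) := by
              calc 4 = 2^2 := rfl
                _ ≤ 2^(m+2) := Nat.pow_le_pow_right (by norm_num) (by omega)
            omega
        _ = 2^((m+2).choose 2 + (m+2)) * 4 := by rw [pow_add]; ring
        _ = 2^((m+3).choose 2) * 4 := by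
            rw [show (m+3).choose 2 = (m+2).choose 2 + (m+2) from choose_succ_two (m+2)]

section
variable (w : ℕ → ℝ) (E : ℝ)

/-- Upper-regime claim: if `s ≥ 1` then `w (t-j) ≤ w t / (s 2^{C(j,2)})` for `1 ≤ j ≤ t-1`. -/
lemma aux_claimU (s : ℝ) (t : ℕ)
    (hw : ∀ i, 0 < w i)
    (hrec : ∀ i : ℕ, w (i+1) * (2^i * ((i:ℝ)+1)) = w i * E)
    (ht : 1 ≤ t) (hs1 : 1 ≤ s) (hsE : E = s * ((t:ℝ) * 2^(t-1))) :
    ∀ j, 1 ≤ j → j ≤ t - 1 → s * 2^(j.choose 2) * w (t - j) ≤ w t := by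
  have htpos : (0:ℝ) < (t:ℝ) * 2^(t-1) := by positivity
  have hE : 0 < E := by rw [hsE]; positivity
  intro j hj1
  induction j, hj1 using Nat.le_induction with
  | base =>
    intro hjt
    have ht2 : 2 ≤ t := by omega
    have h := hrec (t-1)
    rw [show t - 1 + 1 = t by omega] at h
    have hc : ((t-1:ℕ):ℝ) + 1 = (t:ℝ) := by
      rw [Nat.cast_sub (by omega)]; ring
    rw [hc] at h
    -- h : w t * (2^(t-1) * t) = w (t-1) * E
    have hwt : w t = w (t-1) * s := by
      rw [hsE] at h
      have h2 : w t * ((t:ℝ) * 2^(t-1)) = (w (t-1) * s) * ((t:ℝ) * 2^(t-1)) := by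
        linear_combination h
      exact mul_right_cancel₀ (ne_of_gt htpos) h2
    simp [Nat.choose, hwt]
    ring_nf
    exact le_of_eq rfl
  | succ j hj ih =>
    intro hjt
    have hjt' : j ≤ t - 1 := by omega
    have IH := ih hjt'
    -- recurrence at i = t - j - 1
    have h := hrec (t-j-1)
    rw [show t - j - 1 + 1 = t - j by omega] at h
    -- h : w (t-j) * (2^(t-j-1) * ((t-j-1:ℕ) + 1)) = w (t-j-1) * E
    have hc : ((t-j-1:ℕ):ℝ) + 1 = ((t-j:ℕ):ℝ) := by
      rw [Nat.cast_sub (by omega), Nat.cast_sub (by omega)]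
      push_cast; ring
    rw [hc] at h
    set D : ℝ := 2^(t-j-1) * ((t-j:ℕ):ℝ) with hD
    have hDpos : 0 < D := by
      rw [hD]
      have : (0:ℝ) < ((t-j:ℕ):ℝ) := by
        have : 0 < t - j := by omega
        exact_mod_cast this
      positivity
    -- key numeric ineq : 2^{C(j+1,2)} * D ≤ 2^{C(j,2)} * E
    have hkey : (2:ℝ)^((j+1).choose 2) * D ≤ 2^(j.choose 2) * E := by
      have h1 : (2:ℝ)^((j+1).choose 2) * D = 2^(j.choose 2) * (2^(t-1) * ((t-j:ℕ):ℝ)) := by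
        rw [choose_succ_two, hD, pow_add, show (2:ℝ)^(t-1) = 2^j * 2^(t-j-1) by
          rw [← pow_add]; congr 1; omega]
        ring
      rw [h1, hsE]
      have h2 : (2:ℝ)^(t-1) * ((t-j:ℕ):ℝ) ≤ s * ((t:ℝ) * 2^(t-1)) := by
        have h3 : ((t-j:ℕ):ℝ) ≤ (t:ℝ) := by exact_mod_cast Nat.sub_le t j
        nlinarith [pow_pos (show (0:ℝ) < 2 by norm_num) (t-1)]
      exact mul_le_mul_of_nonneg_left h2 (by positivity)
    -- multiply goal by E
    have hgoal : s * 2^((j+1).choose 2) * w (t-(j+1)) * E ≤ w t * E := by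
      have hwE : w (t-(j+1)) * E = w (t-j) * D := by
        rw [show t - (j+1) = t - j - 1 by omega]; exact h.symm
      calc s * 2^((j+1).choose 2) * w (t-(j+1)) * E
          = (s * w (t-j)) * (2^((j+1).choose 2) * D) := by
            rw [show s * 2^((j+1).choose 2) * w (t-(j+1)) * E
              = s * 2^((j+1).choose 2) * (w (t-(j+1)) * E) by ring, hwE]; ring
        _ ≤ (s * w (t-j)) * (2^(j.choose 2) * E) := by
            exact mul_le_mul_of_nonneg_left hkey
              (mul_nonneg (by linarith) (le_of_lt (hw (t-j))))
        _ = (s * 2^(j.choose 2) * w (t-j)) * E := by ring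
        _ ≤ w t * E := mul_le_mul_of_nonneg_right IH (le_of_lt hE)
    exact le_of_mul_le_mul_right hgoal hE

/-- Small-`t` regime: `w (m+1) ≤ w 1 (E/4)^m`. -/
lemma aux_claimB
    (hw : ∀ i, 0 < w i) (hE : 0 < E)
    (hrec : ∀ i : ℕ, w (i+1) * (2^i * ((i:ℝ)+1)) = w i * E) :
    ∀ m : ℕ, w (m+1) ≤ w 1 * (E/4)^m := by
  intro m
  induction m with
  | zero => simp [le_of_eq]
  | succ m ih =>
    have h := hrec (m+1)
    have h4 : (4:ℝ) ≤ 2^(m+1) * (((m+1:ℕ):ℝ) + 1) := by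
      have h1 : (2:ℝ) ≤ 2^(m+1) := by
        calc (2:ℝ) = 2^1 := by norm_num
          _ ≤ 2^(m+1) := by apply pow_le_pow_right₀ (by norm_num); omega
      have h2 : (2:ℝ) ≤ ((m+1:ℕ):ℝ) + 1 := by push_cast; linarith [Nat.cast_nonneg (α := ℝ) m]
      nlinarith
    have hstep : w (m+2) ≤ w (m+1) * (E/4) := by
      have hD : (0:ℝ) < 2^(m+1) * (((m+1:ℕ):ℝ) + 1) := by positivity
      rw [div_eq_mul_inv]
      have := hw (m+2)
      have := hw (m+1)
      nlinarith [mul_le_mul_of_nonneg_left h4 (le_of_lt (hw (m+2)))]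
    calc w (m+2) ≤ w (m+1) * (E/4) := hstep
      _ ≤ (w 1 * (E/4)^m) * (E/4) := by
          apply mul_le_mul_of_nonneg_right ih; positivity
      _ = w 1 * (E/4)^(m+1) := by ring

/-- Regime A, step comparison: if `s ≤ 2^{-(J+1)}` then `2 w(t-k+1) ≤ w(t-k)` for `1 ≤ k ≤ J`. -/
lemma aux_claimA1 (s : ℝ) (t J : ℕ)
    (hw : ∀ i, 0 < w i)
    (hrec : ∀ i : ℕ, w (i+1) * (2^i * ((i:ℝ)+1)) = w i * E)
    (hsE : E = s * ((t:ℝ) * 2^(t-1))) (hs0 : 0 < s)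
    (hJ1 : 1 ≤ J) (htJ : 2*J ≤ t) (hsm : s * 2^(J+1) ≤ 1) :
    ∀ k, 1 ≤ k → k ≤ J → 2 * w (t - k + 1) ≤ w (t - k) := by
  intro k hk1 hkJ
  have ht1 : 1 ≤ t := by omega
  have h := hrec (t-k)
  set D : ℝ := 2^(t-k) * (((t-k:ℕ):ℝ)+1) with hD
  have hDpos : 0 < D := by rw [hD]; positivity
  -- natural-number inequality
  have hn : t * 2^t ≤ 2^(J+1) * (2^(t-k) * (t-k+1)) := by
    have h1 : 2^(t+1) ≤ 2^(J+1) * 2^(t-k) := by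
      rw [← pow_add]; exact Nat.pow_le_pow_right (by norm_num) (by omega)
    have h2 : t ≤ 2 * (t-k+1) := by omega
    calc t * 2^t ≤ (2*(t-k+1)) * 2^t := Nat.mul_le_mul_right _ h2
      _ = 2^(t+1) * (t-k+1) := by ring
      _ ≤ (2^(J+1)*2^(t-k)) * (t-k+1) := Nat.mul_le_mul_right _ h1
      _ = 2^(J+1) * (2^(t-k)*(t-k+1)) := by ring
  have hnR : ((t * 2^t : ℕ):ℝ) ≤ ((2^(J+1) * (2^(t-k) * (t-k+1)) : ℕ):ℝ) :=
    Nat.cast_le.mpr hn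
  push_cast at hnR
  -- hnR : (t:ℝ) * 2^t ≤ 2^(J+1) * (2^(t-k) * ((t-k:ℕ):ℝ + 1))
  have e2 : (2:ℝ)^t = 2 * 2^(t-1) := by
    conv_lhs => rw [show t = t-1+1 by omega]
    rw [pow_succ']
  have hkey : 2 * E ≤ D := by
    have hp : (0:ℝ) < 2^(J+1) := by positivity
    have hmul : (2 * E) * 2^(J+1) ≤ D * 2^(J+1) := by
      have e3 : (2*E) * 2^(J+1) = (s * 2^(J+1)) * ((t:ℝ) * 2^t) := by
        rw [hsE, e2]; ring
      have e4 : (s * 2^(J+1)) * ((t:ℝ) * 2^t) ≤ 1 * ((t:ℝ) * 2^t) := by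
        apply mul_le_mul_of_nonneg_right hsm; positivity
      rw [e3]
      calc (s * 2^(J+1)) * ((t:ℝ) * 2^t) ≤ 1 * ((t:ℝ) * 2^t) := e4
        _ = (t:ℝ) * 2^t := by ring
        _ ≤ 2^(J+1) * (2^(t-k) * (((t-k:ℕ):ℝ) + 1)) := hnR
        _ = D * 2^(J+1) := by rw [hD]; ring
    exact le_of_mul_le_mul_right hmul hp
  -- conclude
  have hfin : (2 * w (t-k+1)) * D ≤ w (t-k) * D := by
    have e5 : (2 * w (t-k+1)) * D = w (t-k) * (2*E) := by
      rw [show (2 * w (t-k+1)) * D = 2 * (w (t-k+1) * D) by ring, hD] at *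
      rw [show 2 * (w ((t-k)+1) * (2^(t-k) * (((t-k:ℕ):ℝ)+1))) = 2 * (w ((t-k)+1) * (2^(t-k) * (((t-k:ℕ):ℝ)+1))) from rfl]
      rw [h]; ring
    rw [e5]
    exact mul_le_mul_of_nonneg_left hkey (le_of_lt (hw (t-k)))
  exact le_of_mul_le_mul_right hfin hDpos

/-- Regime A, iterated: `w (t - (J-m)) ≤ w (t-J) / 2^m`. -/
lemma aux_claimA2 (s : ℝ) (t J : ℕ)
    (hw : ∀ i, 0 < w i)
    (hrec : ∀ i : ℕ, w (i+1) * (2^i * ((i:ℝ)+1)) = w i * E)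
    (hsE : E = s * ((t:ℝ) * 2^(t-1))) (hs0 : 0 < s)
    (hJ1 : 1 ≤ J) (htJ : 2*J ≤ t) (hsm : s * 2^(J+1) ≤ 1) :
    ∀ m, m ≤ J → w (t - (J - m)) ≤ w (t - J) * (1/2:ℝ)^m := by
  intro m
  induction m with
  | zero => intro _; simp
  | succ m ih =>
    intro hmJ
    have ihm := ih (by omega)
    have h1 := aux_claimA1 w E s t J hw hrec hsE hs0 hJ1 htJ hsm (J - m) (by omega) (by omega)
    have e1 : t - (J - (m+1)) = t - (J - m) + 1 := by omega
    rw [e1]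
    calc w (t - (J-m) + 1) ≤ w (t - (J-m)) / 2 := by linarith
      _ ≤ (w (t-J) * (1/2:ℝ)^m) / 2 := by linarith
      _ = w (t-J) * (1/2:ℝ)^(m+1) := by ring


end

set_option maxHeartbeats 2000000 in
/-- For all constants `C > c > 0` there is a constant `K` such that for
every positive integer `t` and real `ρ ≥ 2` with `c < t − ρ < C`, the solution `y = y_t(ρ)`
of the defining equations satisfies `|y_t(ρ) − log(t 2^t)| ≤ K`. -/
theorem y_estimate (C c : ℝ) (hc : 0 < c) (hcC : c < C) :
    ∃ K : ℝ, ∀ t : ℕ, 0 < t → ∀ ρ x y : ℝ, 2 ≤ ρ →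
      c < (t : ℝ) - ρ → (t : ℝ) - ρ < C →
      (∑ i : Fin t, Real.exp (x + ((i.1 + 1 : ℕ) : ℝ) * y) / dI (i.1 + 1)) = 1 →
      (∑ i : Fin t, ((i.1 + 1 : ℕ) : ℝ) *
          Real.exp (x + ((i.1 + 1 : ℕ) : ℝ) * y) / dI (i.1 + 1)) = ρ →
      |y - Real.log ((t : ℝ) * 2 ^ t)| ≤ K := by
  have hC0 : 0 < C := lt_trans hc hcC
  set J : ℕ := ⌈4*C⌉₊ with hJdef
  have hJ1 : 1 ≤ J := by
    have : 0 < J := Nat.ceil_pos.mpr (by positivity)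
    omega
  have hJR : (1:ℝ) ≤ (J:ℝ) := by exact_mod_cast hJ1
  have hJC : 4*C ≤ (J:ℝ) := Nat.le_ceil _
  set S : ℝ := max 1 (8/c) with hSdef
  have hS1 : 1 ≤ S := le_max_left _ _
  set m0 : ℝ := min ((1:ℝ)/2^(J+1)) (1/((2*(J:ℝ)) * 2^(2*J))) with hm0def
  have hm0pos : 0 < m0 := by
    apply lt_min
    · positivity
    · have : (0:ℝ) < 2*(J:ℝ) := by linarith
      positivity
  have hm0le : m0 ≤ 1 := by
    have h1 : (1:ℝ) ≤ 2^(J+1) := by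
      apply one_le_pow₀
      norm_num
    have : (1:ℝ)/2^(J+1) ≤ 1 := by
      rw [div_le_one (by positivity)]; exact h1
    exact le_trans (min_le_left _ _) this
  refine ⟨Real.log S - Real.log m0 + Real.log 2, ?_⟩
  intro t ht0 ρ x y hρ2 hcρ hρC hsum1 hsum2
  set w : ℕ → ℝ := fun n => Real.exp (x + (n:ℝ)*y) / dI n with hwdef
  have hw : ∀ i, 0 < w i := fun i => div_pos (Real.exp_pos _) (dI_pos i)
  set E : ℝ := Real.exp y with hEdef
  have hEpos : 0 < E := Real.exp_pos y
  have hrec : ∀ i : ℕ, w (i+1) * (2^i * ((i:ℝ)+1)) = w i * E := by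
    intro i
    have h1 : dI i ≠ 0 := ne_of_gt (dI_pos i)
    have h2 : (2:ℝ)^i * ((i:ℝ)+1) ≠ 0 := by positivity
    have he : Real.exp (x + ((i:ℝ)+1)*y) = Real.exp (x+(i:ℝ)*y) * E := by
      rw [hEdef, ← Real.exp_add]; ring_nf
    simp only [hwdef]
    push_cast
    rw [dI_succ, he]
    field_simp
  have htR : (0:ℝ) < (t:ℝ) := by exact_mod_cast ht0
  have htpos : (0:ℝ) < (t:ℝ)*2^(t-1) := by positivity
  set s : ℝ := E / ((t:ℝ) * 2^(t-1)) with hsdef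
  have hs0 : 0 < s := div_pos hEpos htpos
  have hsE : E = s * ((t:ℝ)*2^(t-1)) := by rw [hsdef]; field_simp
  -- convert sums to range sums
  have h1 : ∑ i ∈ Finset.range t, w (i+1) = 1 := by
    rw [← hsum1, ← Fin.sum_univ_eq_sum_range (fun i => w (i+1)) t]
  have h2 : ∑ i ∈ Finset.range t, ((i:ℝ)+1) * w (i+1) = ρ := by
    rw [← hsum2, ← Fin.sum_univ_eq_sum_range (fun i => ((i:ℝ)+1) * w (i+1)) t]
    apply Finset.sum_congr rfl
    intro i _
    simp only [hwdef, mul_div_assoc]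
    push_cast
    ring_nf
  have h1r : ∑ j ∈ Finset.range t, w (t-j) = 1 := by
    rw [← h1, ← Finset.sum_range_reflect (fun i => w (i+1)) t]
    apply Finset.sum_congr rfl
    intro j hj
    rw [Finset.mem_range] at hj
    congr 1
    omega
  have hQ : ∑ j ∈ Finset.range t, (j:ℝ) * w (t-j) = (t:ℝ) - ρ := by
    have hQ0 : ∑ i ∈ Finset.range t, ((t:ℝ) - ((i:ℝ)+1)) * w (i+1) = (t:ℝ) - ρ := by
      calc ∑ i ∈ Finset.range t, ((t:ℝ) - ((i:ℝ)+1)) * w (i+1)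
          = ∑ i ∈ Finset.range t, ((t:ℝ) * w (i+1) - ((i:ℝ)+1) * w (i+1)) := by
            apply Finset.sum_congr rfl; intros; ring
        _ = (t:ℝ) * ∑ i ∈ Finset.range t, w (i+1)
            - ∑ i ∈ Finset.range t, ((i:ℝ)+1) * w (i+1) := by
            rw [Finset.sum_sub_distrib, Finset.mul_sum]
        _ = (t:ℝ) * 1 - ρ := by rw [h1, h2]
        _ = (t:ℝ) - ρ := by ring
    rw [← hQ0, ← Finset.sum_range_reflect (fun i => ((t:ℝ) - ((i:ℝ)+1)) * w (i+1)) t]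
    apply Finset.sum_congr rfl
    intro j hj
    rw [Finset.mem_range] at hj
    have e : t-1-j+1 = t-j := by omega
    have e2 : ((t-1-j:ℕ):ℝ) = (t:ℝ) - 1 - (j:ℝ) := by
      rw [Nat.cast_sub (by omega), Nat.cast_sub (by omega)]
      norm_num
    rw [e, e2]
    ring
  have hwt1 : w t ≤ 1 := by
    have h := Finset.single_le_sum (f := fun j => w (t-j))
      (fun j _ => le_of_lt (hw _)) (Finset.mem_range.mpr ht0)
    rw [h1r] at h
    simpa using h
  -- UPPER BOUND : s ≤ S
  have hsS : s ≤ S := by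
    by_cases hs1 : s ≤ 1
    · exact le_trans hs1 (le_max_left _ _)
    · push_neg at hs1
      have hs1' : 1 ≤ s := le_of_lt hs1
      have hcl := aux_claimU w E s t hw hrec (by omega) hs1' hsE
      have hterm : ∀ j ∈ Finset.range t, (j:ℝ) * w (t-j) ≤ 4/s * (1/2:ℝ)^j := by
        intro j hj
        rw [Finset.mem_range] at hj
        rcases Nat.eq_zero_or_pos j with h0 | h0
        · subst h0; simp; positivity
        · have hU := hcl j h0 (by omega)
          have hj2 : (j:ℝ) * 2^j ≤ 2^(j.choose 2) * 4 := by exact_mod_cast nat_j_two_pow j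
          have hpos : (0:ℝ) < s * 2^(j.choose 2) * 2^j := by positivity
          have hhalf : (1/2:ℝ)^j * 2^j = 1 := by
            rw [← mul_pow]; norm_num
          apply le_of_mul_le_mul_right ?_ hpos
          calc (j:ℝ) * w (t-j) * (s * 2^(j.choose 2) * 2^j)
              = ((j:ℝ) * 2^j) * (s * 2^(j.choose 2) * w (t-j)) := by ring
            _ ≤ (2^(j.choose 2) * 4) * (s * 2^(j.choose 2) * w (t-j)) := by
                apply mul_le_mul_of_nonneg_right hj2
                have := hw (t-j)
                positivity
            _ ≤ (2^(j.choose 2) * 4) * w t := by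
                apply mul_le_mul_of_nonneg_left hU (by positivity)
            _ ≤ (2^(j.choose 2) * 4) * 1 := by
                apply mul_le_mul_of_nonneg_left hwt1 (by positivity)
            _ = 4/s * ((1/2:ℝ)^j * 2^j) * (s * 2^(j.choose 2)) := by
                rw [hhalf]; field_simp
            _ = 4/s * (1/2:ℝ)^j * (s * 2^(j.choose 2) * 2^j) := by ring
      have hsum : (t:ℝ) - ρ ≤ 8/s := by
        calc (t:ℝ) - ρ = ∑ j ∈ Finset.range t, (j:ℝ)*w (t-j) := hQ.symm
          _ ≤ ∑ j ∈ Finset.range t, 4/s*(1/2:ℝ)^j := Finset.sum_le_sum hterm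
          _ = 4/s * ∑ j ∈ Finset.range t, (1/2:ℝ)^j := by rw [Finset.mul_sum]
          _ ≤ 4/s * 2 := by
              apply mul_le_mul_of_nonneg_left (sum_geometric_two_le t) (by positivity)
          _ = 8/s := by ring
      have hc8 : c < 8/s := lt_of_lt_of_le hcρ hsum
      have hs8 : s < 8/c := by
        rw [lt_div_iff₀ hs0] at hc8
        rw [lt_div_iff₀ hc]
        linarith
      exact le_trans (le_of_lt hs8) (le_max_right 1 (8/c))
  -- LOWER BOUND : m0 ≤ s
  have hsm0 : m0 ≤ s := by
    by_cases htJ : 2*J ≤ t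
    · -- regime A
      by_contra hcon
      push_neg at hcon
      have hsm : s * 2^(J+1) ≤ 1 := by
        have hlt : s < 1/2^(J+1) := lt_of_lt_of_le hcon (min_le_left _ _)
        have h2 : (0:ℝ) < 2^(J+1) := by positivity
        rw [lt_div_iff₀ h2] at hlt
        linarith
      have hA2 := aux_claimA2 w E s t J hw hrec hsE hs0 hJ1 htJ hsm
      have hsplit : ∑ j ∈ Finset.range (J+1), w (t-j)
          + ∑ j ∈ Finset.Ico (J+1) t, w (t-j) = 1 := by
        rw [← h1r]; simp only [Finset.range_eq_Ico]
        exact Finset.sum_Ico_consecutive _ (by omega) (by omega)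
      have hhead : ∑ j ∈ Finset.range (J+1), w (t-j) ≤ 2 * w (t-J) := by
        calc ∑ j ∈ Finset.range (J+1), w (t-j)
            ≤ ∑ j ∈ Finset.range (J+1), w (t-J) * (1/2:ℝ)^(J-j) := by
              apply Finset.sum_le_sum
              intro j hj
              rw [Finset.mem_range] at hj
              have h := hA2 (J-j) (by omega)
              rw [show J - (J - j) = j by omega] at h
              exact h
          _ = w (t-J) * ∑ j ∈ Finset.range (J+1), (1/2:ℝ)^(J-j) := by
              rw [Finset.mul_sum]
          _ = w (t-J) * ∑ i ∈ Finset.range (J+1), (1/2:ℝ)^i := by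
              congr 1
              rw [← Finset.sum_range_reflect (fun i => (1/2:ℝ)^i) (J+1)]
              apply Finset.sum_congr rfl
              intro j hj
              congr 1
          _ ≤ w (t-J) * 2 :=
              mul_le_mul_of_nonneg_left (sum_geometric_two_le _) (le_of_lt (hw _))
          _ = 2 * w (t-J) := by ring
      have htail : ∑ j ∈ Finset.Ico (J+1) t, w (t-j) ≤ ((t:ℝ) - ρ)/((J:ℝ)+1) := by
        have hmul : ((J:ℝ)+1) * ∑ j ∈ Finset.Ico (J+1) t, w (t-j) ≤ (t:ℝ) - ρ := by
          calc ((J:ℝ)+1) * ∑ j ∈ Finset.Ico (J+1) t, w (t-j)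
              = ∑ j ∈ Finset.Ico (J+1) t, ((J:ℝ)+1) * w (t-j) := Finset.mul_sum _ _ _
            _ ≤ ∑ j ∈ Finset.Ico (J+1) t, (j:ℝ) * w (t-j) := by
                apply Finset.sum_le_sum
                intro j hj
                rw [Finset.mem_Ico] at hj
                have : ((J:ℝ)+1) ≤ (j:ℝ) := by exact_mod_cast hj.1
                exact mul_le_mul_of_nonneg_right this (le_of_lt (hw _))
            _ ≤ ∑ j ∈ Finset.range t, (j:ℝ) * w (t-j) := by
                apply Finset.sum_le_sum_of_subset_of_nonneg
                · rw [Finset.range_eq_Ico]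
                  exact Finset.Ico_subset_Ico (by omega) le_rfl
                · intro j _ _
                  exact mul_nonneg (Nat.cast_nonneg j) (le_of_lt (hw _))
            _ = (t:ℝ) - ρ := hQ
        rw [le_div_iff₀ (by positivity)]
        linarith
      have hwtJ : 3/8 ≤ w (t-J) := by
        have hCJ : ((t:ℝ)-ρ)/((J:ℝ)+1) < 1/4 := by
          rw [div_lt_iff₀ (by positivity)]
          nlinarith
        linarith [hsplit, hhead, htail]
      have hJlt : J < t := by omega
      have hsingle : (J:ℝ) * w (t-J) ≤ (t:ℝ) - ρ := by
        rw [← hQ]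
        exact Finset.single_le_sum
          (fun j _ => mul_nonneg (Nat.cast_nonneg j) (le_of_lt (hw _)))
          (Finset.mem_range.mpr hJlt)
      have h32 : 4*C*(3/8:ℝ) ≤ (J:ℝ) * w (t-J) := by nlinarith [hJC, hwtJ]
      linarith [hsingle, hρC, hC0]
    · -- regime B
      have htJ' : t < 2*J := by omega
      clear htJ
      have hEhalf : 1/2 ≤ E := by
        by_contra hE2
        push_neg at hE2
        have hB := aux_claimB w E hw hEpos hrec
        have hw1 : w 1 ≤ 1 := by
          have h := Finset.single_le_sum (f := fun j => w (t-j))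
            (fun j _ => le_of_lt (hw _)) (Finset.mem_range.mpr (show t-1 < t by omega))
          rw [h1r] at h
          simpa [show t - (t-1) = 1 by omega] using h
        have hterm : ∀ i ∈ Finset.range t, (i:ℝ) * w (i+1) ≤ E * (1/2:ℝ)^i := by
          intro i _
          rcases Nat.eq_zero_or_pos i with h0|h0
          · subst h0; simp; positivity
          · have hBi := hB i
            have hq : (0:ℝ) ≤ (E/4)^i := by positivity
            have hwi : w (i+1) ≤ (E/4)^i := by nlinarith
            have hstep1 : (i:ℝ) * w (i+1) ≤ (i:ℝ) * (E/4)^i :=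
              mul_le_mul_of_nonneg_left hwi (Nat.cast_nonneg i)
            have hi2 : (i:ℝ) ≤ 2^i := by exact_mod_cast le_of_lt (Nat.lt_two_pow_self (n := i))
            have hEi : E^i ≤ E := by
              calc E^i ≤ E^1 := pow_le_pow_of_le_one (le_of_lt hEpos) (by linarith) h0
                _ = E := pow_one E
            have hstep2 : (i:ℝ) * (E/4)^i ≤ E * (1/2:ℝ)^i := by
              have hmm : (i:ℝ) * E^i ≤ 2^i * E :=
                mul_le_mul hi2 hEi (pow_nonneg (le_of_lt hEpos) i) (by positivity)
              have h4 : (0:ℝ) < 4^i := by positivity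
              calc (i:ℝ) * (E/4)^i = (i:ℝ) * E^i / 4^i := by rw [div_pow]; ring
                _ ≤ 2^i * E / 4^i := by
                    apply div_le_div_of_nonneg_right hmm (le_of_lt h4)
                _ = E * (1/2:ℝ)^i := by
                    rw [show (4:ℝ) = 2*2 by norm_num, mul_pow, div_pow]
                    field_simp
                    ring
            linarith
        have hρ1 : ρ - 1 ≤ E * 2 := by
          have e : ∑ i ∈ Finset.range t, (i:ℝ) * w (i+1) = ρ - 1 := by
            calc ∑ i ∈ Finset.range t, (i:ℝ)*w (i+1)
                = ∑ i ∈ Finset.range t, (((i:ℝ)+1)*w (i+1) - w (i+1)) := by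
                  apply Finset.sum_congr rfl; intros; ring
              _ = ρ - 1 := by rw [Finset.sum_sub_distrib, h1, h2]
          calc ρ - 1 = ∑ i ∈ Finset.range t, (i:ℝ)*w (i+1) := e.symm
            _ ≤ ∑ i ∈ Finset.range t, E * (1/2:ℝ)^i := Finset.sum_le_sum hterm
            _ = E * ∑ i ∈ Finset.range t, (1/2:ℝ)^i := by rw [Finset.mul_sum]
            _ ≤ E * 2 :=
                mul_le_mul_of_nonneg_left (sum_geometric_two_le t) (le_of_lt hEpos)
        linarith
      have e2t : (2:ℝ)^(t-1) * 2 = 2^t := by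
        conv_rhs => rw [show t = t-1+1 by omega]
        rw [pow_succ]
      have ht2J : (t:ℝ) * 2^(t-1) * 2 ≤ (2*(J:ℝ)) * 2^(2*J) := by
        have hle1 : (t:ℝ) ≤ 2*(J:ℝ) := by
          have : t ≤ 2*J := by omega
          exact_mod_cast this
        have hle2 : (2:ℝ)^t ≤ 2^(2*J) := by
          apply pow_le_pow_right₀ (by norm_num)
          omega
        calc (t:ℝ) * 2^(t-1) * 2 = (t:ℝ) * 2^t := by rw [← e2t]; ring
          _ ≤ (2*(J:ℝ)) * 2^(2*J) := by
              apply mul_le_mul hle1 hle2 (by positivity) (by linarith)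
      have hfin : 1/((2*(J:ℝ))*2^(2*J)) ≤ s := by
        rw [hsdef, div_le_div_iff₀ (by nlinarith [pow_pos (show (0:ℝ)<2 by norm_num) (2*J)]) htpos]
        nlinarith [pow_pos (show (0:ℝ)<2 by norm_num) (2*J)]
      exact le_trans (min_le_right _ _) hfin
  -- FINAL computation
  have hlogy : y = Real.log s + (Real.log (t:ℝ) + ((t-1:ℕ):ℝ) * Real.log 2) := by
    have h0 : y = Real.log (s * ((t:ℝ)*2^(t-1))) := by
      rw [← hsE, hEdef, Real.log_exp]
    rw [h0, Real.log_mul (ne_of_gt hs0) (ne_of_gt htpos),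
      Real.log_mul (ne_of_gt htR) (by positivity), Real.log_pow]
  have hlogt : Real.log ((t:ℝ) * 2^t) = Real.log (t:ℝ) + (t:ℝ) * Real.log 2 := by
    rw [Real.log_mul (ne_of_gt htR) (by positivity), Real.log_pow]
  have hdiff : y - Real.log ((t:ℝ)*2^t) = Real.log s - Real.log 2 := by
    rw [hlogy, hlogt]
    have e : ((t-1:ℕ):ℝ) = (t:ℝ) - 1 := by
      rw [Nat.cast_sub ht0]
      norm_num
    rw [e]
    ring
  rw [hdiff]
  have hls : Real.log m0 ≤ Real.log s := Real.log_le_log hm0pos hsm0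
  have hlS : Real.log s ≤ Real.log S := Real.log_le_log hs0 hsS
  have hlm0 : Real.log m0 ≤ 0 := Real.log_nonpos (le_of_lt hm0pos) hm0le
  have hlS0 : 0 ≤ Real.log S := Real.log_nonneg hS1
  have hl2 : 0 ≤ Real.log 2 := Real.log_nonneg (by norm_num)
  rw [abs_le]
  constructor <;> linarith
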